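/- For any single-qubit unitary U (with phase parameter φ as in U = [[a,b],[-e^{iφ}b*, e^{iφ}a*]]), any real φ₀ and any pure state |ψ⟩: U† A_{φ₀-φ, U|ψ⟩} = A_{φ₀, |ψ⟩} U†, where A_{φ,|ψ⟩} = e^{-iφ} Υ(|ψ⟩)⟨ψ| + e^{iφ} |ψ⟩(Υ(|ψ⟩))† is the ψ-NOT operation. -/

import Mathlib

/-!
Write `Υ v = J v̄` with `J = [[0, 1], [-1, 0]]`. A direct computation gives `J Ū = e^{-iφ} U J`,
so `Υ (U ψ) = e^{-iφ} U Υ ψ`. Since `|U v⟩⟨U w| = U |v⟩⟨w| U†`, the phases `e^{∓iφ}` coming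
from `Υ` absorb the shift `φ₀ ↦ φ₀ - φ`, giving `A_{φ₀-φ, Uψ} = U A_{φ₀, ψ} U†`; unitarity
`U† U = 1` finishes the proof.
-/

open Matrix Complex

noncomputable section

/-- The U-NOT (antiunitary) operation `Υ(α|0⟩+β|1⟩) = β*|0⟩ - α*|1⟩`. -/
def unot (v : Fin 2 → ℂ) : Fin 2 → ℂ :=
  ![(starRingEnd ℂ) (v 1), -(starRingEnd ℂ) (v 0)]

/-- The general single-qubit unitary `U = [[a, b], [-e^{iφ} b*, e^{iφ} a*]]`. -/
def Umat (a b : ℂ) (φ : ℝ) : Matrix (Fin 2) (Fin 2) ℂ :=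
  !![a, b;
     -(Complex.exp (φ * Complex.I)) * (starRingEnd ℂ) b,
     Complex.exp (φ * Complex.I) * (starRingEnd ℂ) a]


/-- Outer product `|v⟩⟨w|`. -/
def outer (v w : Fin 2 → ℂ) : Matrix (Fin 2) (Fin 2) ℂ :=
  fun i j => v i * (starRingEnd ℂ) (w j)

/-- The ψ-NOT operation `A_{φ,|ψ⟩} = e^{-iφ} Υ(|ψ⟩)⟨ψ| + e^{iφ} |ψ⟩(Υ(|ψ⟩))†`. -/
def Amat (φ : ℝ) (ψ : Fin 2 → ℂ) : Matrix (Fin 2) (Fin 2) ℂ :=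
  Complex.exp (-(φ * Complex.I)) • outer (unot ψ) ψ +
    Complex.exp (φ * Complex.I) • outer ψ (unot ψ)

lemma outer_eq_vecMulVec (v w : Fin 2 → ℂ) : outer v w = vecMulVec v (star w) := rfl

lemma outer_mulVec_mulVec (M : Matrix (Fin 2) (Fin 2) ℂ) (v w : Fin 2 → ℂ) :
    outer (M *ᵥ v) (M *ᵥ w) = M * outer v w * Mᴴ := by
  simp only [outer_eq_vecMulVec, mul_vecMulVec, vecMulVec_mul, star_mulVec]

lemma outer_smul_left (c : ℂ) (v w : Fin 2 → ℂ) : outer (c • v) w = c • outer v w := by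
  simp only [outer_eq_vecMulVec, smul_vecMulVec]

lemma outer_smul_right (c : ℂ) (v w : Fin 2 → ℂ) :
    outer v (c • w) = starRingEnd ℂ c • outer v w := by
  simp only [outer_eq_vecMulVec, star_smul, vecMulVec_smul]
  rfl

lemma conj_exp_ofReal_mul_I (t : ℝ) : starRingEnd ℂ (exp (t * I)) = exp (-(t * I)) := by
  rw [← exp_conj, map_mul, conj_ofReal, conj_I, mul_neg]

lemma exp_neg_mul_I_mul_exp (t : ℝ) : exp (-(t * I)) * exp (t * I) = 1 := by
  rw [← exp_add, neg_add_cancel, exp_zero]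

lemma unot_Umat_mulVec (a b : ℂ) (φ : ℝ) (v : Fin 2 → ℂ) :
    unot (Umat a b φ *ᵥ v) = exp (-(φ * I)) • (Umat a b φ *ᵥ unot v) := by
  have h := exp_neg_mul_I_mul_exp φ
  ext i
  fin_cases i <;>
    simp only [unot, Umat, mulVec, dotProduct, Fin.sum_univ_two, Fin.zero_eta, Fin.mk_one,
      Fin.isValue, of_apply, cons_val', cons_val_zero, cons_val_one, cons_val_fin_one,
      Pi.smul_apply, smul_eq_mul, map_add, map_mul, map_neg, conj_conj, conj_exp_ofReal_mul_I]
  · ring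
  · linear_combination
      (starRingEnd ℂ a * starRingEnd ℂ (v 0) + starRingEnd ℂ b * starRingEnd ℂ (v 1)) * h

lemma Umat_conjTranspose_mul_self {a b : ℂ} (φ : ℝ) (hab : ‖a‖ ^ 2 + ‖b‖ ^ 2 = 1) :
    (Umat a b φ)ᴴ * Umat a b φ = 1 := by
  have hab' : starRingEnd ℂ a * a + starRingEnd ℂ b * b = 1 := by
    simp only [← normSq_eq_conj_mul_self, ← Complex.sq_norm]; exact_mod_cast hab
  have h := exp_neg_mul_I_mul_exp φ
  ext i j
  fin_cases i <;> fin_cases j <;>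
    simp only [Umat, conjTranspose_apply, mul_apply, one_apply, Fin.sum_univ_two, Fin.zero_eta,
      Fin.mk_one, Fin.isValue, zero_ne_one, one_ne_zero, ↓reduceIte, of_apply, cons_val',
      cons_val_zero, cons_val_one, cons_val_fin_one, RCLike.star_def, map_mul, map_neg, conj_conj,
      conj_exp_ofReal_mul_I]
  · linear_combination hab' + b * starRingEnd ℂ b * h
  · linear_combination -(b * starRingEnd ℂ a) * h
  · linear_combination -(a * starRingEnd ℂ b) * h
  · linear_combination hab' + a * starRingEnd ℂ a * h

lemma Amat_Umat_mulVec (a b : ℂ) (φ φ₀ : ℝ) (ψ : Fin 2 → ℂ) :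
    Amat (φ₀ - φ) (Umat a b φ *ᵥ ψ) = Umat a b φ * Amat φ₀ ψ * (Umat a b φ)ᴴ := by
  simp only [Amat, unot_Umat_mulVec, outer_smul_left, outer_smul_right, outer_mulVec_mulVec,
    ← exp_conj, map_neg, map_mul, conj_ofReal, conj_I, smul_smul, ← exp_add,
    Matrix.mul_add, Matrix.add_mul, Matrix.mul_smul, Matrix.smul_mul]
  push_cast
  ring_nf

theorem unitary_conj_psi_not_general
    (a b : ℂ) (φ φ₀ : ℝ) (hab : ‖a‖ ^ 2 + ‖b‖ ^ 2 = 1)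
    (ψ : Fin 2 → ℂ) :
    (Umat a b φ)ᴴ * Amat (φ₀ - φ) ((Umat a b φ).mulVec ψ) =
      Amat φ₀ ψ * (Umat a b φ)ᴴ := by
  rw [Amat_Umat_mulVec, ← Matrix.mul_assoc, ← Matrix.mul_assoc,
    Umat_conjTranspose_mul_self φ hab, Matrix.one_mul]

/-- for any single-qubit unitary `U` (with phase parameter `φ`),
any real `φ₀` and any pure state `|ψ⟩`:
`U† A_{φ₀-φ, U|ψ⟩} = A_{φ₀, |ψ⟩} U†`. -/
theorem unitary_conj_psi_not
    (a b : ℂ) (φ φ₀ : ℝ) (hab : ‖a‖ ^ 2 + ‖b‖ ^ 2 = 1)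
    (ψ : Fin 2 → ℂ) (hψ : ‖ψ 0‖ ^ 2 + ‖ψ 1‖ ^ 2 = 1) :
    (Umat a b φ)ᴴ * Amat (φ₀ - φ) ((Umat a b φ).mulVec ψ) =
      Amat φ₀ ψ * (Umat a b φ)ᴴ :=
  unitary_conj_psi_not_general a b φ φ₀ hab ψ
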